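/- arXiv:2206.13512 — 2 statements merged into one kernel-verified Lean document; each statement's English description precedes it below -/
import Mathlib

section
/- (Banach–Schröder–Bernstein) If A is G-equidecomposable with a subset of B and B is G-equidecomposable with a subset of A, then A and B are G-equidecomposable. -/
open scoped Pointwise

/-- `A` and `B` are `G`-equidecomposable: there are finite partitions
`A = A₁ ∪ … ∪ Aₙ` and `B = B₁ ∪ … ∪ Bₙ` into pairwise disjoint pieces and
`g₁, …, gₙ ∈ G` with `Bᵢ = gᵢ • Aᵢ`. -/
def SetEquidecomp (G : Type*) {X : Type*} [Group G] [MulAction G X] (A B : Set X) : Prop :=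
  ∃ (n : ℕ) (P : Fin n → Set X) (g : Fin n → G),
    Pairwise (Function.onFun Disjoint P) ∧ (⋃ i, P i) = A ∧
    Pairwise (Function.onFun Disjoint fun i => g i • P i) ∧ (⋃ i, g i • P i) = B

/-- `E` is `G`-paradoxical: `E` is nonempty and splits into two disjoint pieces,
each `G`-equidecomposable with `E`. -/
def Paradoxical (G : Type*) {X : Type*} [Group G] [MulAction G X] (E : Set X) : Prop :=
  E.Nonempty ∧ ∃ A B : Set X, A ∪ B = E ∧ Disjoint A B ∧
    SetEquidecomp G A E ∧ SetEquidecomp G B E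

/-! An equidecomposition of `A` and `B` is the same as a bijection `A → B` that moves each point
by one of finitely many group elements. In this form the theorem is the Schröder–Bernstein theorem
for injections respecting the relation "`b = γ • a` for some `γ ∈ S ∪ T⁻¹`", where `S` and `T` are
the finite sets of group elements used by the two given equidecompositions. -/

open Set Function

section

variable {G X : Type*} [Group G] [MulAction G X] {A B : Set X}

theorem SetEquidecomp.exists_bijective (h : SetEquidecomp G A B) :
    ∃ S : Set G, S.Finite ∧ ∃ f : A → B, Bijective f ∧ ∀ a, ∃ γ ∈ S, (f a : X) = γ • a := by
  obtain ⟨n, P, g, hP, hPA, hgP, hgPB⟩ := h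
  choose σ hσ using fun a : A => mem_iUnion.1 (hPA ▸ a.2 : (a : X) ∈ ⋃ i, P i)
  have hmem (a : A) : g (σ a) • (a : X) ∈ B :=
    hgPB ▸ mem_iUnion.2 ⟨σ a, smul_mem_smul_set (hσ a)⟩
  refine ⟨range g, finite_range g, fun a => ⟨g (σ a) • a, hmem a⟩, ⟨?_, ?_⟩,
    fun a => ⟨g (σ a), mem_range_self _, rfl⟩⟩
  · intro a b hab
    have hab : g (σ a) • (a : X) = g (σ b) • (b : X) := congrArg Subtype.val hab
    have hσ_eq : σ a = σ b := hgP.eq <| not_disjoint_iff.2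
      ⟨_, smul_mem_smul_set (hσ a), hab ▸ smul_mem_smul_set (hσ b)⟩
    rw [hσ_eq] at hab
    exact Subtype.ext (smul_left_cancel _ hab)
  · rintro ⟨y, hy⟩
    obtain ⟨i, x, hx, rfl⟩ : ∃ i, ∃ x ∈ P i, g i • x = y := by
      simpa only [← hgPB, mem_iUnion, mem_smul_set] using hy
    have hxA : x ∈ A := hPA ▸ mem_iUnion.2 ⟨i, hx⟩
    have hσx : σ ⟨x, hxA⟩ = i := hP.eq (not_disjoint_iff.2 ⟨x, hσ _, hx⟩)
    exact ⟨⟨x, hxA⟩, Subtype.ext (by simp only [hσx])⟩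

theorem setEquidecomp_of_bijective {ι : Type*} [Finite ι] (g : ι → G) (σ : A → ι) (f : A → B)
    (hf : Bijective f) (hfσ : ∀ a, (f a : X) = g (σ a) • a) : SetEquidecomp G A B := by
  obtain ⟨n, ⟨e⟩⟩ := Finite.exists_equiv_fin ι
  let piece (k : Fin n) : Set A := σ ⁻¹' {e.symm k}
  have hsmul (k : Fin n) :
      g (e.symm k) • ((↑) '' piece k : Set X) = (↑) '' (f '' piece k) := by
    rw [← image_smul, image_image, image_image]
    exact image_congr fun a ha => by rw [hfσ, show σ a = e.symm k from ha]
  have hdisj : Pairwise (Disjoint on piece) := fun k l hkl =>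
    (disjoint_singleton.2 (e.symm.injective.ne hkl)).preimage σ
  have hcover : ⋃ k, piece k = univ :=
    eq_univ_of_forall fun a => mem_iUnion.2 ⟨e (σ a), by simp [piece]⟩
  refine ⟨n, fun k => (↑) '' piece k, fun k => g (e.symm k), ?_, ?_, ?_, ?_⟩
  · exact fun k l hkl => (disjoint_image_iff Subtype.val_injective).2 (hdisj hkl)
  · rw [← image_iUnion, hcover, image_univ, Subtype.range_coe]
  · intro k l hkl
    simp only [onFun, hsmul, disjoint_image_iff Subtype.val_injective, disjoint_image_iff hf.1]
    exact hdisj hkl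
  · simp only [hsmul, ← image_iUnion, hcover, image_univ, hf.2.range_eq, Subtype.range_coe]

theorem setEquidecomp_iff_exists_bijective :
    SetEquidecomp G A B ↔
      ∃ S : Set G, S.Finite ∧ ∃ f : A → B, Bijective f ∧ ∀ a, ∃ γ ∈ S, (f a : X) = γ • a := by
  refine ⟨SetEquidecomp.exists_bijective, ?_⟩
  rintro ⟨S, hS, f, hf, hfS⟩
  choose γ hγS hγ using hfS
  have := hS.to_subtype
  exact setEquidecomp_of_bijective ((↑) : S → G) (fun a => ⟨γ a, hγS a⟩) f hf hγ

end

/-- The Banach–Schröder–Bernstein theorem: if `A` is `G`-equidecomposable with a subset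
of `B` and `B` is `G`-equidecomposable with a subset of `A`, then `A` and `B` are
`G`-equidecomposable. -/
theorem banach_schroeder_bernstein {G X : Type*} [Group G] [MulAction G X] {A B : Set X}
    (h1 : ∃ B' ⊆ B, SetEquidecomp G A B') (h2 : ∃ A' ⊆ A, SetEquidecomp G B A') :
    SetEquidecomp G A B := by
  obtain ⟨B', hB', hAB'⟩ := h1
  obtain ⟨A', hA', hBA'⟩ := h2
  obtain ⟨S, hS, f, hf, hfS⟩ := hAB'.exists_bijective
  obtain ⟨T, hT, k, hk, hkT⟩ := hBA'.exists_bijective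
  obtain ⟨h, hh, hhST⟩ := Embedding.schroeder_bernstein_of_rel
    ((inclusion_injective hB').comp hf.1) ((inclusion_injective hA').comp hk.1)
    (fun a b => ∃ γ ∈ S ∪ T⁻¹, (b : X) = γ • a)
    (fun a => (hfS a).imp fun _ ⟨hγ, e⟩ => ⟨Or.inl hγ, e⟩)
    (fun b => by
      obtain ⟨γ, hγ, e⟩ := hkT b
      exact ⟨γ⁻¹, Or.inr (inv_mem_inv.2 hγ), eq_inv_smul_iff.2 e.symm⟩)
  exact setEquidecomp_iff_exists_bijective.2 ⟨S ∪ T⁻¹, hS.union hT.inv, h, hh, hhST⟩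
end

section
/- If X ⊆ ℝ³, D ⊆ X is countable, L is a line through the origin avoiding D, and every rotation about L maps D into X, then X \ D is SO(3)-equidecomposable with X. -/
open scoped Pointwise

abbrev E3 : Type := EuclideanSpace ℝ (Fin 3)
abbrev SO3 : Type := Matrix.specialOrthogonalGroup (Fin 3) ℝ

noncomputable instance : Group SO3 :=
  { (inferInstance : Monoid SO3) with
    inv := fun A => ⟨star A.1, by
      refine ⟨Unitary.star_mem A.2.1, ?_⟩
      show (star A.1).det = 1
      have h : A.1.det = 1 := A.2.2
      rw [Matrix.star_eq_conjTranspose, Matrix.det_conjTranspose, h]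
      simp⟩
    inv_mul_cancel := fun A => Subtype.ext (Matrix.mem_unitaryGroup_iff'.mp A.2.1) }

noncomputable instance : SMul SO3 E3 := ⟨fun g x => WithLp.toLp 2 (g.1.mulVec x.ofLp)⟩

/-- `SO3` acts on `ℝ³` by rotation (matrix-vector multiplication). -/
noncomputable instance : MulAction SO3 E3 where
  one_smul x := by
    show WithLp.toLp 2 ((1 : SO3).1.mulVec x.ofLp) = x
    simp
  mul_smul g h x := by
    show WithLp.toLp 2 ((g * h).1.mulVec x.ofLp) = WithLp.toLp 2 (g.1.mulVec (WithLp.toLp 2 (h.1.mulVec x.ofLp)).ofLp)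
    simp [Matrix.mulVec_mulVec]

lemma SO3.smul_add (g : SO3) (x y : E3) : g • (x + y) = g • x + g • y :=
  congrArg (WithLp.toLp 2) (Matrix.mulVec_add g.1 x.ofLp y.ofLp)

lemma SO3.smul_neg (g : SO3) (x : E3) : g • (-x) = -(g • x) :=
  congrArg (WithLp.toLp 2) (Matrix.mulVec_neg x.ofLp g.1)

/-!
Take an orthonormal frame whose third vector spans `L`; conjugating the rotations about the
`z`-axis by its matrix gives a one-parameter family `θ ↦ R θ` of rotations about `L`. For a point
`x ∉ L` the rotation angles that fix `x` form the countable set `2πℤ`, so the angles carrying `x`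
into the countable set `D` are countable too. Hence some `θ` has every positive power of
`ρ = R θ` moving `D` off itself. The orbit set `T = ⋃ₙ ρⁿ • D` is then the disjoint union
`D ∪ ρ • T`, so `X \ D = (X \ T) ∪ ρ • T`, which `1` and `ρ⁻¹` map piecewise onto
`X = (X \ T) ∪ T`.
-/

open Real Matrix

lemma pairwise_disjoint_fin_two {α : Type*} [PartialOrder α] [OrderBot α] {a b : α}
    (h : Disjoint a b) : Pairwise (Function.onFun Disjoint ![a, b]) := by
  intro i j hij
  fin_cases i <;> fin_cases j <;> simp_all [Function.onFun, h.symm]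

section Equidecomposition

variable {G α : Type*} [Group G] [MulAction G α]

lemma setEquidecomp_union_smul_union {A₁ A₂ : Set α} (g₁ g₂ : G) (hA : Disjoint A₁ A₂)
    (hgA : Disjoint (g₁ • A₁) (g₂ • A₂)) :
    SetEquidecomp G (A₁ ∪ A₂) (g₁ • A₁ ∪ g₂ • A₂) := by
  have hpieces : (fun i => ![g₁, g₂] i • ![A₁, A₂] i) = ![g₁ • A₁, g₂ • A₂] := by
    ext i : 1; fin_cases i <;> rfl
  refine ⟨2, ![A₁, A₂], ![g₁, g₂], pairwise_disjoint_fin_two hA, ?_, ?_, ?_⟩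
  · ext; simp [Fin.exists_fin_two]
  · rw [hpieces]; exact pairwise_disjoint_fin_two hgA
  · ext; simp [Fin.exists_fin_two]

theorem setEquidecomp_diff_of_pow_smul {X D : Set α} (ρ : G) (hX : ∀ n : ℕ, ρ ^ n • D ⊆ X)
    (hD : ∀ n : ℕ, Disjoint (ρ ^ (n + 1) • D) D) : SetEquidecomp G (X \ D) X := by
  set T := ⋃ n : ℕ, ρ ^ n • D
  have hρT : ρ • T = ⋃ n : ℕ, ρ ^ (n + 1) • D := by
    simp only [T, Set.smul_set_iUnion, smul_smul, pow_succ']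
  have hT : T = D ∪ ρ • T := by
    rw [hρT]; simpa using (Set.union_iUnion_nat_succ fun n => ρ ^ n • D).symm
  have hTX : T ⊆ X := Set.iUnion_subset hX
  have hDT : Disjoint D (ρ • T) := by
    rw [hρT, Set.disjoint_iUnion_right]
    exact fun n => (hD n).symm
  have hsource : X \ D = (X \ T) ∪ ρ • T := by
    ext x
    have hxT := Set.ext_iff.1 hT x
    have hxD : x ∈ D → x ∉ ρ • T := fun h => Set.disjoint_left.1 hDT h
    have hxX : x ∈ T → x ∈ X := fun h => hTX h
    simp only [Set.mem_sdiff, Set.mem_union] at hxT ⊢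
    tauto
  have key := setEquidecomp_union_smul_union (1 : G) ρ⁻¹ (A₁ := X \ T) (A₂ := ρ • T) ?_ ?_
  · rwa [← hsource, one_smul, inv_smul_smul, Set.sdiff_union_of_subset hTX] at key
  · exact Set.disjoint_sdiff_left.mono_right (Set.subset_union_right.trans hT.superset)
  · rw [one_smul, inv_smul_smul]; exact Set.disjoint_sdiff_left

end Equidecomposition

section AddChar

variable {A G α : Type*} [AddGroup A] [Group G] [MulAction G α]

lemma AddChar.countable_setOf_smul_mem (ψ : AddChar A G) {x : α}
    (hx : {a | ψ a • x = x}.Countable) {D : Set α} (hD : D.Countable) :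
    {a | ψ a • x ∈ D}.Countable := by
  have hfiber : ∀ y, {a | ψ a • x = y}.Countable := by
    intro y
    rcases Set.eq_empty_or_nonempty {a | ψ a • x = y} with hempty | ⟨a₀, ha₀⟩
    · simp [hempty]
    refine (hx.image (a₀ + ·)).mono fun a (ha : ψ a • x = y) => ?_
    refine ⟨-a₀ + a, ?_, add_neg_cancel_left a₀ a⟩
    change ψ (-a₀ + a) • x = x
    rw [AddChar.map_add_eq_mul, AddChar.map_neg_eq_inv, mul_smul, ha, ← ha₀, inv_smul_smul]
  have hunion : {a | ψ a • x ∈ D} = ⋃ y ∈ D, {a | ψ a • x = y} := by ext; simp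
  rw [hunion]
  exact hD.biUnion fun y _ => hfiber y

lemma AddChar.exists_forall_disjoint_pow_succ_smul (ψ : AddChar ℝ G) {D : Set α}
    (hD : D.Countable) (hψD : ∀ x ∈ D, {θ | ψ θ • x ∈ D}.Countable) :
    ∃ θ, ∀ n : ℕ, Disjoint (ψ θ ^ (n + 1) • D) D := by
  set bad := ⋃ x ∈ D, ⋃ n : ℕ, (fun θ : ℝ => (n + 1) • θ) ⁻¹' {θ | ψ θ • x ∈ D}
  have hbad : bad.Countable :=
    hD.biUnion fun x hx => Set.countable_iUnion fun n =>
      (hψD x hx).preimage (smul_right_injective ℝ n.succ_ne_zero)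
  obtain ⟨θ, hθ⟩ :=
    (Set.ne_univ_iff_exists_notMem bad).1 fun h => Set.not_countable_univ (h ▸ hbad)
  refine ⟨θ, fun n => Set.disjoint_left.2 ?_⟩
  rintro _ ⟨x, hx, rfl⟩ hmem
  refine hθ (Set.mem_biUnion hx (Set.mem_iUnion.2 ⟨n, ?_⟩))
  rw [Set.mem_preimage, Set.mem_ofPred_eq, AddChar.map_nsmul_eq_pow]
  exact hmem

end AddChar

noncomputable def rotZ (θ : ℝ) : Matrix (Fin 3) (Fin 3) ℝ :=
  !![cos θ, -sin θ, 0; sin θ, cos θ, 0; 0, 0, 1]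

lemma rotZ_zero : rotZ 0 = 1 := by
  simp [rotZ, one_fin_three]

lemma rotZ_add (θ φ : ℝ) : rotZ (θ + φ) = rotZ θ * rotZ φ := by
  ext i j
  fin_cases i <;> fin_cases j <;> simp [rotZ, mul_apply, Fin.sum_univ_three, cos_add, sin_add]
  all_goals ring

lemma rotZ_transpose (θ : ℝ) : (rotZ θ)ᵀ = rotZ (-θ) := by
  ext i j
  fin_cases i <;> fin_cases j <;> simp [rotZ]

lemma rotZ_mem_specialOrthogonalGroup (θ : ℝ) :
    rotZ θ ∈ specialOrthogonalGroup (Fin 3) ℝ := by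
  rw [mem_specialOrthogonalGroup_iff, mem_orthogonalGroup_iff, rotZ_transpose, ← rotZ_add,
    add_neg_cancel, rotZ_zero]
  refine ⟨rfl, ?_⟩
  simpa [rotZ, det_fin_three, sq] using cos_sq_add_sin_sq θ

lemma rotZ_mulVec_single_two (θ : ℝ) : rotZ θ *ᵥ Pi.single 2 1 = Pi.single 2 1 := by
  ext i; fin_cases i <;> simp [rotZ]

lemma exists_int_mul_two_pi_eq_of_rotZ_mulVec_eq_self {θ : ℝ} {v : Fin 3 → ℝ}
    (hv : v 0 ≠ 0 ∨ v 1 ≠ 0) (h : rotZ θ *ᵥ v = v) : ∃ k : ℤ, k * (2 * π) = θ := by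
  have h0 := congrFun h 0
  have h1 := congrFun h 1
  simp only [mulVec, dotProduct, Fin.sum_univ_three, rotZ, of_apply, cons_val', cons_val_zero,
    cons_val_one, cons_val, cons_val_fin_one, neg_mul, zero_mul, add_zero] at h0 h1
  have hpos : 0 < v 0 ^ 2 + v 1 ^ 2 := by
    rcases hv with hv | hv <;> positivity
  have hcos : (cos θ - 1) * (v 0 ^ 2 + v 1 ^ 2) = 0 := by linear_combination v 0 * h0 + v 1 * h1
  exact (cos_eq_one_iff θ).1 (by nlinarith)

section Frame

variable {ι : Type*} [Fintype ι] (b : OrthonormalBasis ι ℝ (EuclideanSpace ℝ ι))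

noncomputable def frameMatrix : Matrix ι ι ℝ :=
  (EuclideanSpace.basisFun ι ℝ).toBasis.toMatrix b

lemma frameMatrix_apply (i j : ι) : frameMatrix b i j = b j i := rfl

variable [DecidableEq ι]

lemma frameMatrix_mem_orthogonalGroup : frameMatrix b ∈ orthogonalGroup ι ℝ :=
  (EuclideanSpace.basisFun ι ℝ).toMatrix_orthonormalBasis_mem_orthogonal b

lemma frameMatrix_mulVec_single (i : ι) : frameMatrix b *ᵥ Pi.single i 1 = (b i).ofLp := by
  ext j; simp [mulVec_single, frameMatrix_apply]

lemma star_frameMatrix_mulVec (x : EuclideanSpace ℝ ι) :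
    star (frameMatrix b) *ᵥ x.ofLp = (b.repr x).ofLp := by
  have h : frameMatrix b *ᵥ (b.repr x).ofLp = x.ofLp := by
    have := congrArg WithLp.ofLp (b.sum_repr x)
    ext i
    simpa [frameMatrix_apply, mulVec, dotProduct, mul_comm] using congrFun this i
  rw [← h, mulVec_mulVec, Unitary.star_mul_self_of_mem (frameMatrix_mem_orthogonalGroup b),
    one_mulVec]

end Frame

lemma OrthonormalBasis.exists_apply_eq {𝕜 ι E : Type*} [RCLike 𝕜] [Fintype ι]
    [NormedAddCommGroup E] [InnerProductSpace 𝕜 E] [FiniteDimensional 𝕜 E]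
    (hcard : Module.finrank 𝕜 E = Fintype.card ι) (i : ι) {v : E} (hv : ‖v‖ = 1) :
    ∃ b : OrthonormalBasis ι 𝕜 E, b i = v := by
  have hsingle : Orthonormal 𝕜 (Set.domRestrict {i} fun _ : ι => v) :=
    ⟨fun _ => hv, fun j k hjk => absurd (Subsingleton.elim j k) hjk⟩
  obtain ⟨b, hb⟩ := hsingle.exists_orthonormalBasis_extension_of_card_eq hcard
  exact ⟨b, hb i rfl⟩

instance : SMulCommClass SO3 ℝ E3 :=
  ⟨fun g c x => congrArg (WithLp.toLp 2) (mulVec_smul g.1 c x.ofLp)⟩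

section AxisRotation

variable (b : OrthonormalBasis (Fin 3) ℝ E3)

lemma frameMatrix_conj_rotZ_mem (θ : ℝ) :
    frameMatrix b * rotZ θ * star (frameMatrix b) ∈ specialOrthogonalGroup (Fin 3) ℝ := by
  have hB := frameMatrix_mem_orthogonalGroup b
  have hR := mem_specialOrthogonalGroup_iff.1 (rotZ_mem_specialOrthogonalGroup θ)
  refine mem_specialOrthogonalGroup_iff.2 ⟨?_, ?_⟩
  · exact Submonoid.mul_mem _ (Submonoid.mul_mem _ hB hR.1) (Unitary.star_mem hB)
  · rw [det_conj_of_mul_eq_one (Unitary.mul_star_self_of_mem hB)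
      (Unitary.star_mul_self_of_mem hB), hR.2]

noncomputable def axisRotation : AddChar ℝ SO3 where
  toFun θ := ⟨frameMatrix b * rotZ θ * star (frameMatrix b), frameMatrix_conj_rotZ_mem b θ⟩
  map_zero_eq_one' := Subtype.ext <| by
    simp [rotZ_zero, Unitary.mul_star_self_of_mem (frameMatrix_mem_orthogonalGroup b)]
  map_add_eq_mul' θ φ := Subtype.ext <| by
    have hB := Unitary.star_mul_self_of_mem (frameMatrix_mem_orthogonalGroup b)
    simp only [rotZ_add, Submonoid.coe_mul, Matrix.mul_assoc]
    rw [← Matrix.mul_assoc (star _) (frameMatrix b), hB, Matrix.one_mul]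

lemma axisRotation_smul (θ : ℝ) (x : E3) :
    axisRotation b θ • x =
      WithLp.toLp 2 ((frameMatrix b * rotZ θ * star (frameMatrix b)) *ᵥ x.ofLp) := rfl

lemma axisRotation_smul_basis_two (θ : ℝ) : axisRotation b θ • b 2 = b 2 := by
  rw [axisRotation_smul, ← mulVec_mulVec, ← mulVec_mulVec, star_frameMatrix_mulVec,
    b.repr_self, PiLp.ofLp_single, rotZ_mulVec_single_two, frameMatrix_mulVec_single,
    WithLp.toLp_ofLp]

lemma axisRotation_smul_of_mem_span {x : E3} (hx : x ∈ ℝ ∙ b 2) (θ : ℝ) :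
    axisRotation b θ • x = x := by
  obtain ⟨c, rfl⟩ := Submodule.mem_span_singleton.1 hx
  rw [smul_comm, axisRotation_smul_basis_two]

lemma countable_setOf_axisRotation_smul_eq_self {x : E3} (hx : x ∉ ℝ ∙ b 2) :
    {θ | axisRotation b θ • x = x}.Countable := by
  refine (Set.countable_range fun k : ℤ => k * (2 * π)).mono fun θ (hθ : _ = x) => ?_
  have hB := Unitary.star_mul_self_of_mem (frameMatrix_mem_orthogonalGroup b)
  have hfix : rotZ θ *ᵥ (b.repr x).ofLp = (b.repr x).ofLp := calc
    _ = star (frameMatrix b) *ᵥ (frameMatrix b * rotZ θ * star (frameMatrix b)) *ᵥ x.ofLp := by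
      rw [mulVec_mulVec, ← Matrix.mul_assoc, ← Matrix.mul_assoc, hB, Matrix.one_mul,
        ← mulVec_mulVec, star_frameMatrix_mulVec]
    _ = star (frameMatrix b) *ᵥ x.ofLp :=
      congrArg (fun y : E3 => star (frameMatrix b) *ᵥ y.ofLp) hθ
    _ = (b.repr x).ofLp := star_frameMatrix_mulVec b x
  have hoff : b.repr x 0 ≠ 0 ∨ b.repr x 1 ≠ 0 := by
    by_contra! h
    refine hx (Submodule.mem_span_singleton.2 ⟨b.repr x 2, ?_⟩)
    simpa [Fin.sum_univ_three, h.1, h.2] using b.sum_repr x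
  exact exists_int_mul_two_pi_eq_of_rotZ_mulVec_eq_self hoff hfix

end AxisRotation

theorem equidecomp_diff_countable_general (X D : Set E3) (hD : D.Countable)
    (u : E3) (hu : u ≠ 0) (hdisj : ∀ x ∈ D, x ∉ Submodule.span ℝ {u})
    (hrot : ∀ ρ : SO3, (∀ x ∈ Submodule.span ℝ {u}, ρ • x = x) → ρ • D ⊆ X) :
    SetEquidecomp SO3 (X \ D) X := by
  obtain ⟨b, hb⟩ := OrthonormalBasis.exists_apply_eq (𝕜 := ℝ) (by simp) (2 : Fin 3)
    (norm_smul_inv_norm (𝕜 := ℝ) hu)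
  have hspan : ℝ ∙ b 2 = ℝ ∙ u := by
    rw [hb, Submodule.span_singleton_smul_eq (by simpa using hu)]
  set R := axisRotation b
  obtain ⟨θ, hθ⟩ := R.exists_forall_disjoint_pow_succ_smul hD fun x hx =>
    R.countable_setOf_smul_mem
      (countable_setOf_axisRotation_smul_eq_self b (hspan ▸ hdisj x hx)) hD
  refine setEquidecomp_diff_of_pow_smul (R θ) (fun n => ?_) hθ
  rw [← AddChar.map_nsmul_eq_pow]
  exact hrot _ fun x hx => axisRotation_smul_of_mem_span b (hspan ▸ hx) _

/-- Absorbing a countable set by an irrational rotation: if `D ⊆ X` is countable, the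
line `L` (spanned by `u ≠ 0`) through the origin avoids `D`, and every rotation about `L`
maps `D` into `X`, then `X \ D` is `SO(3)`-equidecomposable with `X`. -/
theorem equidecomp_diff_countable (X D : Set E3) (hDX : D ⊆ X) (hD : D.Countable)
    (u : E3) (hu : u ≠ 0) (hdisj : ∀ x ∈ D, x ∉ Submodule.span ℝ {u})
    (hrot : ∀ ρ : SO3, (∀ x ∈ Submodule.span ℝ {u}, ρ • x = x) → ρ • D ⊆ X) :
    SetEquidecomp SO3 (X \ D) X :=
  equidecomp_diff_countable_general X D hD u hu hdisj hrot
end
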